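/- For CCS processes, if there is a hereditary history preserving bisimulation between the configuration-structure encodings of P₁ and P₂, then for every parallel context Q there is a hereditary history preserving bisimulation between the encodings of P₁|Q and P₂|Q, where the encoding of P|Q is the restricted relabelled product of the encodings of P and Q. -/

import Mathlib

/-! Configuration structures (Winskel / van Glabbeek). -/

variable {E E₁ E₂ E₃ L : Type*}

/-- Finiteness axiom of configuration structures. -/
def Finiteness (C : Set (Set E)) : Prop :=
  ∀ x ∈ C, ∀ e ∈ x, ∃ z ∈ C, z.Finite ∧ e ∈ z ∧ z ⊆ x

/-- Coincidence freeness axiom. -/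
def CoincidenceFree (C : Set (Set E)) : Prop :=
  ∀ x ∈ C, ∀ e ∈ x, ∀ e' ∈ x, e ≠ e' → ∃ z ∈ C, z ⊆ x ∧ (e ∈ z ↔ e' ∉ z)

/-- Finite completeness: a family bounded above by a finite configuration has its union in C. -/
def FinComplete (C : Set (Set E)) : Prop :=
  ∀ X ⊆ C, (∃ y ∈ C, y.Finite ∧ ∀ x ∈ X, x ⊆ y) → ⋃₀ X ∈ C

/-- Stability axiom. -/
def Stability (C : Set (Set E)) : Prop :=
  ∀ x ∈ C, ∀ y ∈ C, x ∪ y ∈ C → x ∩ y ∈ C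

/-- `C` is (the configuration family of) a configuration structure. -/
def IsCS (C : Set (Set E)) : Prop :=
  Finiteness C ∧ CoincidenceFree C ∧ FinComplete C ∧ Stability C

/-- Causality order on a configuration `x`: `e₁ ≤ₓ e₂` iff every configuration
`z ⊆ x` containing `e₂` also contains `e₁`. -/
def causeLe (C : Set (Set E)) (x : Set E) (e₁ e₂ : E) : Prop :=
  ∀ z ∈ C, z ⊆ x → e₂ ∈ z → e₁ ∈ z

/-! Hereditary history preserving bisimulation. -/

/-- `f ⊆ E₁ × E₂` is (the graph of) a bijection between `x₁` and `x₂`. -/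
def IsBij (f : Set (E₁ × E₂)) (x₁ : Set E₁) (x₂ : Set E₂) : Prop :=
  (∀ p ∈ f, p.1 ∈ x₁ ∧ p.2 ∈ x₂) ∧
  (∀ e₁ ∈ x₁, ∃! e₂ : E₂, (e₁, e₂) ∈ f) ∧
  (∀ e₂ ∈ x₂, ∃! e₁ : E₁, (e₁, e₂) ∈ f)

/-- `f` is a label- and order-preserving bijection between configurations
`x₁` of `C₁` and `x₂` of `C₂`. -/
def LabOrdIso (C₁ : Set (Set E₁)) (C₂ : Set (Set E₂)) (ℓ₁ : E₁ → L) (ℓ₂ : E₂ → L)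
    (x₁ : Set E₁) (x₂ : Set E₂) (f : Set (E₁ × E₂)) : Prop :=
  IsBij f x₁ x₂ ∧
  (∀ p ∈ f, ℓ₁ p.1 = ℓ₂ p.2) ∧
  (∀ p ∈ f, ∀ q ∈ f, (causeLe C₁ x₁ p.1 q.1 ↔ causeLe C₂ x₂ p.2 q.2))

/-- Restriction of a mapping `f` to pairs whose first component is in `x₁`. -/
def restrMap (f : Set (E₁ × E₂)) (x₁ : Set E₁) : Set (E₁ × E₂) :=
  {p ∈ f | p.1 ∈ x₁}

/-- `R` is a hereditary history preserving bisimulation between the labelled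
configuration structures `(C₁, ℓ₁)` and `(C₂, ℓ₂)`. -/
def IsHHPB (C₁ : Set (Set E₁)) (C₂ : Set (Set E₂)) (ℓ₁ : E₁ → L) (ℓ₂ : E₂ → L)
    (R : Set E₁ → Set E₂ → Set (E₁ × E₂) → Prop) : Prop :=
  R ∅ ∅ ∅ ∧
  ∀ x₁ x₂ f, R x₁ x₂ f →
    x₁ ∈ C₁ ∧ x₂ ∈ C₂ ∧ LabOrdIso C₁ C₂ ℓ₁ ℓ₂ x₁ x₂ f ∧
    -- forward, left to right
    (∀ e₁, e₁ ∉ x₁ → insert e₁ x₁ ∈ C₁ →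
      ∃ e₂ f', e₂ ∉ x₂ ∧ insert e₂ x₂ ∈ C₂ ∧
        R (insert e₁ x₁) (insert e₂ x₂) f' ∧ f = restrMap f' x₁) ∧
    -- forward, right to left
    (∀ e₂, e₂ ∉ x₂ → insert e₂ x₂ ∈ C₂ →
      ∃ e₁ f', e₁ ∉ x₁ ∧ insert e₁ x₁ ∈ C₁ ∧
        R (insert e₁ x₁) (insert e₂ x₂) f' ∧ f = restrMap f' x₁) ∧
    -- backward, left to right
    (∀ e₁ ∈ x₁, x₁ \ {e₁} ∈ C₁ →
      ∃ e₂ ∈ x₂, x₂ \ {e₂} ∈ C₂ ∧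
        R (x₁ \ {e₁}) (x₂ \ {e₂}) (restrMap f (x₁ \ {e₁}))) ∧
    -- backward, right to left
    (∀ e₂ ∈ x₂, x₂ \ {e₂} ∈ C₂ →
      ∃ e₁ ∈ x₁, x₁ \ {e₁} ∈ C₁ ∧
        R (x₁ \ {e₁}) (x₂ \ {e₂}) (restrMap f (x₁ \ {e₁})))

/-! CCS syntax (with a general binary sum) and contexts. -/

/-- Actions: input, output, or silent action `τ`. -/
inductive Act (N : Type) : Type
  | inp (a : N)
  | out (a : N)
  | tau
deriving DecidableEq

/-- The dual of an action. -/
def Act.dual {N : Type} : Act N → Act N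
  | .inp a => .out a
  | .out a => .inp a
  | .tau => .tau

/-- `α` mentions the name `a`. -/
def Act.mentions {N : Type} (a : N) : Act N → Prop
  | .inp b => b = a
  | .out b => b = a
  | .tau => False

/-- CCS processes. -/
inductive CCS (N : Type) : Type
  | nil
  | act (α : Act N) (P : CCS N)
  | sum (P Q : CCS N)
  | par (P Q : CCS N)
  | res (a : N) (P : CCS N)
deriving DecidableEq

/-- Free names of a CCS process. -/
def CCS.fn {N : Type} : CCS N → Set N
  | .nil => ∅
  | .act α P => {a | α.mentions a} ∪ P.fn
  | .sum P Q => P.fn ∪ Q.fn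
  | .par P Q => P.fn ∪ Q.fn
  | .res a P => P.fn \ {a}

/-- CCS contexts: `C ::= [·] | α.C | C+P | C|P | (a)C`. -/
inductive Ctx (N : Type) : Type
  | hole
  | act (α : Act N) (C : Ctx N)
  | sum (C : Ctx N) (P : CCS N)
  | par (C : Ctx N) (P : CCS N)
  | res (a : N) (C : Ctx N)

/-- Instantiating a context with a process. -/
def Ctx.fill {N : Type} : Ctx N → CCS N → CCS N
  | .hole, P => P
  | .act α C, P => .act α (C.fill P)
  | .sum C Q, P => .sum (C.fill P) Q
  | .par C Q, P => .par (C.fill P) Q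
  | .res a C, P => .res a (C.fill P)

/-! Labelled configuration structures (bundled) and the encoding of CCS. -/

/-- A labelled configuration structure. -/
structure LCS (L : Type) where
  E : Type
  C : Set (Set E)
  lab : E → L

/-- Encoding of `0`. -/
def lcsNil {L : Type} : LCS L :=
  ⟨Empty, {∅}, fun e => e.elim⟩

/-- Prefix `α.A`: a fresh minimal event (`none`) labelled `α` below all
configurations. -/
def lcsPrefix {L : Type} (α : L) (A : LCS L) : LCS L :=
  ⟨Option A.E, {∅} ∪ {y | ∃ x ∈ A.C, y = insert none (Option.some '' x)},
   fun e => e.elim α A.lab⟩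

/-- Coproduct (encoding the sum). -/
def lcsSum {L : Type} (A B : LCS L) : LCS L :=
  ⟨A.E ⊕ B.E,
   {y | (∃ x ∈ A.C, y = Sum.inl '' x) ∨ (∃ x ∈ B.C, y = Sum.inr '' x)},
   Sum.elim A.lab B.lab⟩

/-- Restriction of the name `a`: keep only configurations whose events do not
mention `a`. -/
def lcsRes {N : Type} (a : N) (A : LCS (Act N)) : LCS (Act N) :=
  ⟨A.E, {x ∈ A.C | ∀ e ∈ x, ¬ (A.lab e).mentions a}, A.lab⟩

/-- Synchronisation algebra for the parallel composition: `none` is the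
label `0` of removed events. -/
def syncLab {N : Type} [DecidableEq N] :
    Option (Act N) → Option (Act N) → Option (Act N)
  | some (.inp a), some (.out b) => if a = b then some .tau else none
  | some (.out a), some (.inp b) => if a = b then some .tau else none
  | some α, none => some α
  | none, some β => some β
  | some _, some _ => none
  | none, none => none

/-- First projection of a candidate configuration of a product. -/
def pproj₁ {E₁ E₂ : Type} (x : Set (Option E₁ × Option E₂)) : Set E₁ :=
  {a | ∃ e ∈ x, e.1 = some a}

/-- Second projection of a candidate configuration of a product. -/
def pproj₂ {E₁ E₂ : Type} (x : Set (Option E₁ × Option E₂)) : Set E₂ :=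
  {a | ∃ e ∈ x, e.2 = some a}

/-- Local injectivity of the first projection. -/
def pLocInj₁ {E₁ E₂ : Type} (x : Set (Option E₁ × Option E₂)) : Prop :=
  ∀ e ∈ x, ∀ e' ∈ x, ∀ a : E₁, e.1 = some a → e'.1 = some a → e = e'

/-- Local injectivity of the second projection. -/
def pLocInj₂ {E₁ E₂ : Type} (x : Set (Option E₁ × Option E₂)) : Prop :=
  ∀ e ∈ x, ∀ e' ∈ x, ∀ a : E₂, e.2 = some a → e'.2 = some a → e = e'

/-- Basic requirements on configurations of the parallel composition: all
events have a defined (non-`0`) label, projections are configurations, and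
they are locally injective. -/
def parPre {N : Type} [DecidableEq N] (A B : LCS (Act N))
    (x : Set (Option A.E × Option B.E)) : Prop :=
  (∀ e ∈ x, syncLab (e.1.map A.lab) (e.2.map B.lab) ≠ none) ∧
  pproj₁ x ∈ A.C ∧ pproj₂ x ∈ B.C ∧ pLocInj₁ x ∧ pLocInj₂ x

/-- Parallel composition of labelled configuration structures: restricted
relabelled product. -/
def lcsPar {N : Type} [DecidableEq N] (A B : LCS (Act N)) : LCS (Act N) :=
  ⟨Option A.E × Option B.E,
   {x | parPre A B x ∧
        (∀ e ∈ x, ∃ z, z ⊆ x ∧ parPre A B z ∧ z.Finite ∧ e ∈ z) ∧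
        (∀ e ∈ x, ∀ e' ∈ x, e ≠ e' → ∃ z, z ⊆ x ∧ parPre A B z ∧ (e ∈ z ↔ e' ∉ z))},
   fun e => (syncLab (e.1.map A.lab) (e.2.map B.lab)).getD .tau⟩

/-- The compositional encoding of CCS into labelled configuration structures. -/
def enc {N : Type} [DecidableEq N] : CCS N → LCS (Act N)
  | .nil => lcsNil
  | .act α P => lcsPrefix α (enc P)
  | .sum P Q => lcsSum (enc P) (enc Q)
  | .par P Q => lcsPar (enc P) (enc Q)
  | .res a P => lcsRes a (enc P)

/-!
Given a hereditary history preserving bisimulation `R` between `A₁` and `A₂`, relate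
configurations `x` of `A₁ ∥ B` and `y` of `A₂ ∥ B` through the bijections `g` that act as some
`f` with `R (π₁ x) (π₁ y) f` on the first component and as the identity on the second.

Causality inside a configuration of a product is the reflexive-transitive closure of the
causality of its two projections, as long as the components are closed under causal downsets
(true of every encoding, by induction on the process). Hence `g` preserves causality, and a
candidate set of product events is a configuration as soon as that closure is antisymmetric, a
property that is transported along `g` as well. A step of `x` is matched by the step of `R` on
the first projection, or by no step of `R` when the event belongs to `B` alone. The
right-to-left clauses are the left-to-right ones for the converse relations.
-/

open Relation

section Bijection

variable {f f' : Set (E₁ × E₂)} {x₁ x₁' : Set E₁} {x₂ x₂' : Set E₂}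

theorem preimage_swap_preimage_swap (s : Set (E₁ × E₂)) :
    Prod.swap ⁻¹' (Prod.swap ⁻¹' s) = s := by
  ext; simp

theorem isBij_swap_iff : IsBij (Prod.swap ⁻¹' f) x₂ x₁ ↔ IsBij f x₁ x₂ := by
  simp only [IsBij, Set.mem_preimage, Prod.forall, Prod.swap_prod_mk]
  exact ⟨fun ⟨h₁, h₂, h₃⟩ => ⟨fun a b h => (h₁ b a h).symm, h₃, h₂⟩,
    fun ⟨h₁, h₂, h₃⟩ => ⟨fun a b h => (h₁ b a h).symm, h₃, h₂⟩⟩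

theorem IsBij.right_unique (hf : IsBij f x₁ x₂) {a : E₁} {b b' : E₂}
    (h : (a, b) ∈ f) (h' : (a, b') ∈ f) : b = b' :=
  (hf.2.1 a (hf.1 _ h).1).unique h h'

theorem IsBij.left_unique (hf : IsBij f x₁ x₂) {a a' : E₁} {b : E₂}
    (h : (a, b) ∈ f) (h' : (a', b) ∈ f) : a = a' :=
  (hf.2.2 b (hf.1 _ h).2).unique h h'

theorem IsBij.insert_pair (hf : IsBij f x₁ x₂) {a : E₁} {b : E₂} (ha : a ∉ x₁) (hb : b ∉ x₂) :
    IsBij (insert (a, b) f) (insert a x₁) (insert b x₂) := by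
  refine ⟨?_, ?_, ?_⟩
  · rintro p (rfl | hp)
    · exact ⟨Set.mem_insert _ _, Set.mem_insert _ _⟩
    · exact ⟨Or.inr (hf.1 _ hp).1, Or.inr (hf.1 _ hp).2⟩
  · rintro c (rfl | hc)
    · exact ⟨b, Or.inl rfl, fun d hd => hd.elim (fun h => (Prod.mk.inj h).2)
        fun h => absurd (hf.1 _ h).1 ha⟩
    · obtain ⟨d, hd, huniq⟩ := hf.2.1 c hc
      exact ⟨d, Or.inr hd, fun d' hd' => hd'.elim
        (fun h => (ha ((Prod.mk.inj h).1 ▸ hc)).elim) (huniq d')⟩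
  · rintro d (rfl | hd)
    · exact ⟨a, Or.inl rfl, fun c hc => hc.elim (fun h => (Prod.mk.inj h).1)
        fun h => absurd (hf.1 _ h).2 hb⟩
    · obtain ⟨c, hc, huniq⟩ := hf.2.2 d hd
      exact ⟨c, Or.inr hc, fun c' hc' => hc'.elim
        (fun h => (hb ((Prod.mk.inj h).2 ▸ hd)).elim) (huniq c')⟩

theorem IsBij.diff_singleton (hf : IsBij f x₁ x₂) {a : E₁} {b : E₂} (hab : (a, b) ∈ f) :
    IsBij (f \ {(a, b)}) (x₁ \ {a}) (x₂ \ {b}) := by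
  refine ⟨?_, ?_, ?_⟩
  · rintro ⟨c, d⟩ ⟨hcd, hne⟩
    rw [Set.mem_singleton_iff, Prod.mk.injEq] at hne
    refine ⟨⟨(hf.1 _ hcd).1, ?_⟩, (hf.1 _ hcd).2, ?_⟩
    · rintro (rfl : c = a); exact hne ⟨rfl, hf.right_unique hcd hab⟩
    · rintro (rfl : d = b); exact hne ⟨hf.left_unique hcd hab, rfl⟩
  · rintro c ⟨hc, hca⟩
    obtain ⟨d, hd, huniq⟩ := hf.2.1 c hc
    exact ⟨d, ⟨hd, fun h => hca (Prod.mk.inj h).1⟩, fun d' hd' => huniq d' hd'.1⟩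
  · rintro d ⟨hd, hdb⟩
    obtain ⟨c, hc, huniq⟩ := hf.2.2 d hd
    exact ⟨c, ⟨hc, fun h => hdb (Prod.mk.inj h).2⟩, fun c' hc' => huniq c' hc'.1⟩

theorem IsBij.restrMap_diff_eq (hf : IsBij f x₁ x₂) {a : E₁} {b : E₂} (hab : (a, b) ∈ f) :
    restrMap f (x₁ \ {a}) = f \ {(a, b)} := by
  ext ⟨c, d⟩
  simp only [restrMap, Set.mem_ofPred_eq, Set.mem_sdiff, Set.mem_singleton_iff, Prod.mk.injEq]
  constructor
  · rintro ⟨hcd, -, hca⟩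
    exact ⟨hcd, fun h => hca h.1⟩
  · rintro ⟨hcd, hne⟩
    refine ⟨hcd, (hf.1 _ hcd).1, fun hca => hne ⟨hca, ?_⟩⟩
    subst hca
    exact hf.right_unique hcd hab

theorem IsBij.restrMap_diff (hf : IsBij f x₁ x₂) {a : E₁} {b : E₂} (hab : (a, b) ∈ f) :
    IsBij (restrMap f (x₁ \ {a})) (x₁ \ {a}) (x₂ \ {b}) :=
  hf.restrMap_diff_eq hab ▸ hf.diff_singleton hab

theorem IsBij.mem_of_restrMap_diff (hf : IsBij f x₁ x₂) {a : E₁} {b : E₂} (ha : a ∈ x₁)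
    (h : IsBij (restrMap f (x₁ \ {a})) (x₁ \ {a}) (x₂ \ {b})) : (a, b) ∈ f := by
  obtain ⟨b', hab', -⟩ := hf.2.1 a ha
  obtain rfl | hne := eq_or_ne b' b
  · exact hab'
  obtain ⟨c, ⟨hcb', hc, hca⟩, -⟩ := h.2.2 b' ⟨(hf.1 _ hab').2, hne⟩
  exact absurd (hf.left_unique hcb' hab') hca

theorem IsBij.mem_of_subset_insert (hf : IsBij f x₁ x₂) {a : E₁} {b : E₂}
    (hf' : IsBij f' (insert a x₁) (insert b x₂)) (hsub : f ⊆ f') (hb : b ∉ x₂) : (a, b) ∈ f' := by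
  obtain ⟨c, hc, -⟩ := hf'.2.2 b (Set.mem_insert _ _)
  rcases (hf'.1 _ hc).1 with rfl | hcx
  · exact hc
  obtain ⟨d, hd, -⟩ := hf.2.1 c hcx
  exact absurd (hf'.right_unique (hsub hd) hc ▸ (hf.1 _ hd).2) hb

theorem IsBij.eq_restrMap_iff_subset (hf : IsBij f x₁ x₂) (hf' : IsBij f' x₁' x₂') :
    f = restrMap f' x₁ ↔ f ⊆ f' := by
  refine ⟨fun h => h ▸ Set.sep_subset _ _,
    fun h => Set.ext fun p => ⟨fun hp => ⟨h hp, (hf.1 p hp).1⟩, ?_⟩⟩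
  rintro ⟨hp, hp₁⟩
  obtain ⟨b, hb, -⟩ := hf.2.1 p.1 hp₁
  rwa [hf'.right_unique (h hb) hp] at hb

theorem swap_eq_restrMap_iff (hf : IsBij f x₁ x₂) (hf' : IsBij f' x₁' x₂') :
    Prod.swap ⁻¹' f = restrMap (Prod.swap ⁻¹' f') x₂ ↔ f = restrMap f' x₁ := by
  rw [(isBij_swap_iff.2 hf).eq_restrMap_iff_subset (isBij_swap_iff.2 hf'),
    hf.eq_restrMap_iff_subset hf']
  exact Set.preimage_subset_preimage_iff (by simp [Prod.swap_surjective.range_eq])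

theorem swap_restrMap_swap_diff (hf : IsBij f x₁ x₂) {a : E₁} {b : E₂} (hab : (a, b) ∈ f) :
    Prod.swap ⁻¹' restrMap (Prod.swap ⁻¹' f) (x₂ \ {b}) = restrMap f (x₁ \ {a}) := by
  rw [(isBij_swap_iff.2 hf).restrMap_diff_eq (show (b, a) ∈ Prod.swap ⁻¹' f from hab),
    hf.restrMap_diff_eq hab]
  ext; simp [Prod.swap_eq_iff_eq_swap]

end Bijection

section Symmetry

variable {C₁ : Set (Set E₁)} {C₂ : Set (Set E₂)} {ℓ₁ : E₁ → L} {ℓ₂ : E₂ → L}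
  {R : Set E₁ → Set E₂ → Set (E₁ × E₂) → Prop} {x₁ : Set E₁} {x₂ : Set E₂} {f : Set (E₁ × E₂)}

def swapRel (R : Set E₁ → Set E₂ → Set (E₁ × E₂) → Prop) :
    Set E₂ → Set E₁ → Set (E₂ × E₁) → Prop :=
  fun x₂ x₁ f => R x₁ x₂ (Prod.swap ⁻¹' f)

theorem swapRel_preimage_swap :
    swapRel R x₂ x₁ (Prod.swap ⁻¹' f) ↔ R x₁ x₂ f := by
  rw [swapRel, preimage_swap_preimage_swap]

/-- The left-to-right clauses of `IsHHPB`, without `R ∅ ∅ ∅`. -/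
def IsHHPSim (C₁ : Set (Set E₁)) (C₂ : Set (Set E₂)) (ℓ₁ : E₁ → L) (ℓ₂ : E₂ → L)
    (R : Set E₁ → Set E₂ → Set (E₁ × E₂) → Prop) : Prop :=
  ∀ x₁ x₂ f, R x₁ x₂ f →
    x₁ ∈ C₁ ∧ x₂ ∈ C₂ ∧ LabOrdIso C₁ C₂ ℓ₁ ℓ₂ x₁ x₂ f ∧
    (∀ e₁, e₁ ∉ x₁ → insert e₁ x₁ ∈ C₁ →
      ∃ e₂ f', e₂ ∉ x₂ ∧ insert e₂ x₂ ∈ C₂ ∧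
        R (insert e₁ x₁) (insert e₂ x₂) f' ∧ f = restrMap f' x₁) ∧
    (∀ e₁ ∈ x₁, x₁ \ {e₁} ∈ C₁ →
      ∃ e₂ ∈ x₂, x₂ \ {e₂} ∈ C₂ ∧
        R (x₁ \ {e₁}) (x₂ \ {e₂}) (restrMap f (x₁ \ {e₁})))

theorem labOrdIso_swap_iff :
    LabOrdIso C₂ C₁ ℓ₂ ℓ₁ x₂ x₁ (Prod.swap ⁻¹' f) ↔ LabOrdIso C₁ C₂ ℓ₁ ℓ₂ x₁ x₂ f := by
  simp only [LabOrdIso, isBij_swap_iff, Set.mem_preimage, Prod.forall, Prod.swap_prod_mk]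
  exact and_congr_right fun _ => and_congr
    ⟨fun h a b hab => (h b a hab).symm, fun h a b hab => (h b a hab).symm⟩
    ⟨fun h a b hab c d hcd => (h b a hab d c hcd).symm,
      fun h a b hab c d hcd => (h b a hab d c hcd).symm⟩

theorem forward_swapRel_iff (hf : IsBij f x₁ x₂) (hR : ∀ y₁ y₂ g, R y₁ y₂ g → IsBij g y₁ y₂) :
    (∀ e₂, e₂ ∉ x₂ → insert e₂ x₂ ∈ C₂ →
      ∃ e₁ f', e₁ ∉ x₁ ∧ insert e₁ x₁ ∈ C₁ ∧
        swapRel R (insert e₂ x₂) (insert e₁ x₁) f' ∧ Prod.swap ⁻¹' f = restrMap f' x₂) ↔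
    (∀ e₂, e₂ ∉ x₂ → insert e₂ x₂ ∈ C₂ →
      ∃ e₁ f', e₁ ∉ x₁ ∧ insert e₁ x₁ ∈ C₁ ∧
        R (insert e₁ x₁) (insert e₂ x₂) f' ∧ f = restrMap f' x₁) := by
  refine forall₃_congr fun e₂ _ _ => ⟨?_, ?_⟩
  · rintro ⟨e₁, f', he₁, hins, hR', hres⟩
    rw [← preimage_swap_preimage_swap f'] at hres
    exact ⟨e₁, _, he₁, hins, hR', (swap_eq_restrMap_iff hf (hR _ _ _ hR')).1 hres⟩
  · rintro ⟨e₁, f', he₁, hins, hR', hres⟩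
    exact ⟨e₁, Prod.swap ⁻¹' f', he₁, hins, swapRel_preimage_swap.2 hR',
      (swap_eq_restrMap_iff hf (hR _ _ _ hR')).2 hres⟩

theorem backward_swapRel_iff (hf : IsBij f x₁ x₂) (hR : ∀ y₁ y₂ g, R y₁ y₂ g → IsBij g y₁ y₂) :
    (∀ e₂ ∈ x₂, x₂ \ {e₂} ∈ C₂ →
      ∃ e₁ ∈ x₁, x₁ \ {e₁} ∈ C₁ ∧
        swapRel R (x₂ \ {e₂}) (x₁ \ {e₁}) (restrMap (Prod.swap ⁻¹' f) (x₂ \ {e₂}))) ↔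
    (∀ e₂ ∈ x₂, x₂ \ {e₂} ∈ C₂ →
      ∃ e₁ ∈ x₁, x₁ \ {e₁} ∈ C₁ ∧
        R (x₁ \ {e₁}) (x₂ \ {e₂}) (restrMap f (x₁ \ {e₁}))) := by
  refine forall₃_congr fun e₂ he₂ _ => exists_congr fun e₁ => and_congr_right fun he₁ =>
    and_congr_right fun _ => ?_
  constructor
  · intro h
    have hmem : (e₂, e₁) ∈ Prod.swap ⁻¹' f :=
      (isBij_swap_iff.2 hf).mem_of_restrMap_diff he₂ (isBij_swap_iff.1 (hR _ _ _ h))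
    rwa [swapRel, swap_restrMap_swap_diff hf hmem] at h
  · intro h
    rw [swapRel, swap_restrMap_swap_diff hf (hf.mem_of_restrMap_diff he₁ (hR _ _ _ h))]
    exact h

theorem isHHPB_iff :
    IsHHPB C₁ C₂ ℓ₁ ℓ₂ R ↔
      R ∅ ∅ ∅ ∧ IsHHPSim C₁ C₂ ℓ₁ ℓ₂ R ∧ IsHHPSim C₂ C₁ ℓ₂ ℓ₁ (swapRel R) := by
  constructor
  · rintro ⟨h₀, h⟩
    have hbij : ∀ y₁ y₂ g, R y₁ y₂ g → IsBij g y₁ y₂ := fun _ _ _ hg => (h _ _ _ hg).2.2.1.1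
    refine ⟨h₀, fun x₁ x₂ f hf => ?_, fun x₂ x₁ F hF => ?_⟩
    · obtain ⟨h₁, h₂, hiso, hfwd, -, hbwd, -⟩ := h _ _ _ hf
      exact ⟨h₁, h₂, hiso, hfwd, hbwd⟩
    · obtain ⟨f, rfl⟩ : ∃ f, F = Prod.swap ⁻¹' f := ⟨_, (preimage_swap_preimage_swap F).symm⟩
      obtain ⟨h₁, h₂, hiso, -, hfwd, -, hbwd⟩ := h _ _ _ (swapRel_preimage_swap.1 hF)
      exact ⟨h₂, h₁, labOrdIso_swap_iff.2 hiso, (forward_swapRel_iff hiso.1 hbij).2 hfwd,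
        (backward_swapRel_iff hiso.1 hbij).2 hbwd⟩
  · rintro ⟨h₀, hsim, hsim'⟩
    have hbij : ∀ y₁ y₂ g, R y₁ y₂ g → IsBij g y₁ y₂ := fun _ _ _ hg => (hsim _ _ _ hg).2.2.1.1
    refine ⟨h₀, fun x₁ x₂ f hf => ?_⟩
    obtain ⟨h₁, h₂, hiso, hfwd, hbwd⟩ := hsim _ _ _ hf
    obtain ⟨-, -, -, hfwd', hbwd'⟩ := hsim' _ _ _ (swapRel_preimage_swap.2 hf)
    exact ⟨h₁, h₂, hiso, hfwd, (forward_swapRel_iff hiso.1 hbij).1 hfwd', hbwd,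
      (backward_swapRel_iff hiso.1 hbij).1 hbwd'⟩

end Symmetry

def IsCausalDownset (C : Set (Set E)) (x S : Set E) : Prop :=
  ∀ a ∈ S, ∀ b ∈ x, causeLe C x b a → b ∈ S

def DownsetClosed (C : Set (Set E)) : Prop :=
  ∀ x ∈ C, ∀ S ⊆ x, IsCausalDownset C x S → S ∈ C

theorem IsCausalDownset.preimage {φ : E₁ → E₂} {C₁ : Set (Set E₁)} {C₂ : Set (Set E₂)}
    {x S : Set E₂} (hC : ∀ z ∈ C₂, ∀ a, φ a ∈ z → φ ⁻¹' z ∈ C₁)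
    (hS : IsCausalDownset C₂ x S) : IsCausalDownset C₁ (φ ⁻¹' x) (φ ⁻¹' S) :=
  fun a ha _ hb hba => hS _ ha _ hb fun z hz hzx haz =>
    hba _ (hC z hz a haz) (Set.preimage_mono hzx) haz

theorem downsetClosed_singleton_empty : DownsetClosed ({∅} : Set (Set E)) := by
  rintro x (rfl : x = ∅) S hS -
  exact Set.subset_empty_iff.1 hS

theorem DownsetClosed.sep_forall {C : Set (Set E)} (hC : DownsetClosed C) (p : E → Prop) :
    DownsetClosed {x ∈ C | ∀ e ∈ x, p e} :=
  fun x hx S hS hdown => ⟨hC x hx.1 S hS fun e he e' he' h =>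
    hdown e he e' he' fun z hz hzx hz' => h z hz.1 hzx hz', fun e he => hx.2 e (hS he)⟩

theorem DownsetClosed.prefix {C : Set (Set E)} (hC : DownsetClosed C) :
    DownsetClosed ({∅} ∪ {y | ∃ x ∈ C, y = insert none (Option.some '' x)}) := by
  have hpre : ∀ v : Set E, Option.some ⁻¹' insert none (Option.some '' v) = v := fun v => by
    ext; simp
  rintro x (rfl | ⟨u, hu, rfl⟩) S hS hdown
  · exact Or.inl (Set.subset_empty_iff.1 hS)
  rcases S.eq_empty_or_nonempty with rfl | ⟨e, he⟩
  · exact Or.inl rfl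
  have hnone : none ∈ S := by
    refine hdown e he none (Set.mem_insert _ _) ?_
    rintro z (rfl | ⟨v, -, rfl⟩) - hez
    · exact hez.elim
    · exact Set.mem_insert _ _
  have hdown' := hdown.preimage (C₁ := C) (φ := Option.some) <| by
    rintro z (rfl | ⟨v, hv, rfl⟩) a ha
    · exact ha.elim
    · rwa [hpre]
  rw [hpre] at hdown'
  have hT : Option.some ⁻¹' S ∈ C :=
    hC u hu _ (hpre u ▸ Set.preimage_mono hS) hdown'
  refine Or.inr ⟨_, hT, Set.ext fun o => ?_⟩
  cases o <;> simp [hnone]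

theorem DownsetClosed.sum {C₁ : Set (Set E₁)} {C₂ : Set (Set E₂)} (h₁ : DownsetClosed C₁)
    (h₂ : DownsetClosed C₂) :
    DownsetClosed {y | (∃ x ∈ C₁, y = Sum.inl '' x) ∨ (∃ x ∈ C₂, y = Sum.inr '' x)} := by
  have hl (u : Set E₁) : Sum.inl ⁻¹' (Sum.inl '' u : Set (E₁ ⊕ E₂)) = u :=
    Set.preimage_image_eq _ Sum.inl_injective
  have hr (u : Set E₂) : Sum.inr ⁻¹' (Sum.inr '' u : Set (E₁ ⊕ E₂)) = u :=
    Set.preimage_image_eq _ Sum.inr_injective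
  rintro x (⟨u, hu, rfl⟩ | ⟨u, hu, rfl⟩) S hS hdown
  · have hdown' := hdown.preimage (C₁ := C₁) (φ := Sum.inl) <| by
      rintro z (⟨v, hv, rfl⟩ | ⟨v, -, rfl⟩) a ha
      · rwa [hl]
      · simp at ha
    rw [hl] at hdown'
    exact Or.inl ⟨_, h₁ u hu _ (hl u ▸ Set.preimage_mono hS) hdown',
      (Set.image_preimage_eq_of_subset (hS.trans (Set.image_subset_range _ _))).symm⟩
  · have hdown' := hdown.preimage (C₁ := C₂) (φ := Sum.inr) <| by
      rintro z (⟨v, -, rfl⟩ | ⟨v, hv, rfl⟩) a ha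
      · simp at ha
      · rwa [hr]
    rw [hr] at hdown'
    exact Or.inr ⟨_, h₂ u hu _ (hr u ▸ Set.preimage_mono hS) hdown',
      (Set.image_preimage_eq_of_subset (hS.trans (Set.image_subset_range _ _))).symm⟩

section Transfer

variable {g : Set (E₁ × E₂)} {x : Set E₁} {y : Set E₂} {P : E₁ → E₁ → Prop} {Q : E₂ → E₂ → Prop}

theorem IsBij.reflTransGen_of_step (hg : IsBij g x y) (hP : ∀ a b, P a b → a ∈ x)
    (hstep : ∀ p q p' q', (p, q) ∈ g → (p', q') ∈ g → P p p' → Q q q')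
    {p p' : E₁} {q q' : E₂} (h : ReflTransGen P p p') (hpq : (p, q) ∈ g) (hpq' : (p', q') ∈ g) :
    ReflTransGen Q q q' := by
  induction h generalizing q' with
  | refl => rw [hg.right_unique hpq hpq']
  | tail _ hbc ih =>
    obtain ⟨c, hc, -⟩ := hg.2.1 _ (hP _ _ hbc)
    exact (ih hc).tail (hstep _ _ _ _ hc hpq' hbc)

theorem IsBij.reflTransGen_iff (hg : IsBij g x y) (hP : ∀ a b, P a b → a ∈ x)
    (hQ : ∀ a b, Q a b → a ∈ y)
    (hstep : ∀ p q p' q', (p, q) ∈ g → (p', q') ∈ g → (P p p' ↔ Q q q'))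
    {p p' : E₁} {q q' : E₂} (hpq : (p, q) ∈ g) (hpq' : (p', q') ∈ g) :
    ReflTransGen P p p' ↔ ReflTransGen Q q q' :=
  ⟨fun h => hg.reflTransGen_of_step hP (fun _ _ _ _ h₁ h₂ => (hstep _ _ _ _ h₁ h₂).1) h hpq hpq',
    fun h => (isBij_swap_iff.2 hg).reflTransGen_of_step hQ
      (fun _ _ _ _ h₁ h₂ => (hstep _ _ _ _ h₁ h₂).2) h hpq hpq'⟩

theorem IsBij.antisymm_of_iff (hg : IsBij g x y)
    (hiff : ∀ p q p' q', (p, q) ∈ g → (p', q') ∈ g → (P p p' ↔ Q q q'))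
    (hQ : ∀ q ∈ y, ∀ q' ∈ y, Q q q' → Q q' q → q = q') :
    ∀ p ∈ x, ∀ p' ∈ x, P p p' → P p' p → p = p' := by
  intro p hp p' hp' h h'
  obtain ⟨q, hq, -⟩ := hg.2.1 p hp
  obtain ⟨q', hq', -⟩ := hg.2.1 p' hp'
  obtain rfl := hQ q (hg.1 _ hq).2 q' (hg.1 _ hq').2 ((hiff _ _ _ _ hq hq').1 h)
    ((hiff _ _ _ _ hq' hq).1 h')
  exact hg.left_unique hq hq'

end Transfer

section Projections

variable {A B : Type} {x y : Set (Option A × Option B)} {e : Option A × Option B}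

theorem pproj₁_empty : pproj₁ (∅ : Set (Option A × Option B)) = ∅ := by
  simp [pproj₁]

theorem pproj₂_empty : pproj₂ (∅ : Set (Option A × Option B)) = ∅ := by
  simp [pproj₂]

theorem pproj₁_mono (h : x ⊆ y) : pproj₁ x ⊆ pproj₁ y :=
  fun _ ⟨r, hr, hra⟩ => ⟨r, h hr, hra⟩

theorem pproj₂_mono (h : x ⊆ y) : pproj₂ x ⊆ pproj₂ y :=
  fun _ ⟨r, hr, hrb⟩ => ⟨r, h hr, hrb⟩

theorem pproj₁_insert : pproj₁ (insert e x) = {a | e.1 = some a} ∪ pproj₁ x := by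
  ext; simp [pproj₁]

theorem pproj₂_insert : pproj₂ (insert e x) = {b | e.2 = some b} ∪ pproj₂ x := by
  ext; simp [pproj₂]

theorem pproj₁_insert_some {a : A} (ha : e.1 = some a) :
    pproj₁ (insert e x) = insert a (pproj₁ x) := by
  rw [pproj₁_insert, ha, Set.insert_eq]
  simp

theorem pproj₁_insert_none (ha : e.1 = none) : pproj₁ (insert e x) = pproj₁ x := by
  simp [pproj₁_insert, ha]

theorem pproj₁_diff_some (hinj : pLocInj₁ x) (he : e ∈ x) {a : A} (ha : e.1 = some a) :
    pproj₁ (x \ {e}) = pproj₁ x \ {a} := by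
  ext c
  constructor
  · rintro ⟨r, ⟨hr, hre⟩, hrc⟩
    exact ⟨⟨r, hr, hrc⟩, fun hca => hre (hinj r hr e he c hrc (hca ▸ ha))⟩
  · rintro ⟨⟨r, hr, hrc⟩, hca⟩
    exact ⟨r, ⟨hr, fun hre => hca (Option.some_inj.1 ((hre ▸ hrc).symm.trans ha))⟩, hrc⟩

theorem pproj₁_diff_none (ha : e.1 = none) : pproj₁ (x \ {e}) = pproj₁ x := by
  ext c
  exact ⟨fun ⟨r, hr, hrc⟩ => ⟨r, hr.1, hrc⟩,
    fun ⟨r, hr, hrc⟩ => ⟨r, ⟨hr, fun hre => by simp_all⟩, hrc⟩⟩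

theorem notMem_pproj₁_of_insert (hinj : pLocInj₁ (insert e x)) (he : e ∉ x) {a : A}
    (ha : e.1 = some a) : a ∉ pproj₁ x :=
  fun ⟨r, hr, hra⟩ => he (hinj r (Or.inr hr) e (Set.mem_insert _ _) a hra ha ▸ hr)

theorem notMem_pproj₂_of_insert (hinj : pLocInj₂ (insert e x)) (he : e ∉ x) {b : B}
    (hb : e.2 = some b) : b ∉ pproj₂ x :=
  fun ⟨r, hr, hrb⟩ => he (hinj r (Or.inr hr) e (Set.mem_insert _ _) b hrb hb ▸ hr)

theorem notMem_of_fresh (h₁ : ∀ a, e.1 = some a → a ∉ pproj₁ x)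
    (h₂ : ∀ b, e.2 = some b → b ∉ pproj₂ x) (hne : e ≠ (none, none)) : e ∉ x := by
  intro he
  rcases he₁ : e.1 with _ | a
  · rcases he₂ : e.2 with _ | b
    · exact hne (Prod.ext he₁ he₂)
    · exact h₂ b he₂ ⟨e, he, he₂⟩
  · exact h₁ a he₁ ⟨e, he, he₁⟩

theorem pLocInj₁_insert (hx : pLocInj₁ x) (he : ∀ a, e.1 = some a → a ∉ pproj₁ x) :
    pLocInj₁ (insert e x) := by
  rintro r (rfl | hr) s (rfl | hs) a h₁ h₂
  · rfl
  · exact absurd ⟨s, hs, h₂⟩ (he a h₁)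
  · exact absurd ⟨r, hr, h₁⟩ (he a h₂)
  · exact hx r hr s hs a h₁ h₂

theorem pLocInj₂_insert (hx : pLocInj₂ x) (he : ∀ b, e.2 = some b → b ∉ pproj₂ x) :
    pLocInj₂ (insert e x) := by
  rintro r (rfl | hr) s (rfl | hs) b h₁ h₂
  · rfl
  · exact absurd ⟨s, hs, h₂⟩ (he b h₁)
  · exact absurd ⟨r, hr, h₁⟩ (he b h₂)
  · exact hx r hr s hs b h₁ h₂

end Projections

section ParCause

variable {N : Type} {A B : LCS (Act N)} {x w : Set (Option A.E × Option B.E)}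
  {r s : Option A.E × Option B.E}

def parCauseStep (A B : LCS (Act N)) (x : Set (Option A.E × Option B.E))
    (r s : Option A.E × Option B.E) : Prop :=
  r ∈ x ∧ s ∈ x ∧
    ((∃ a a', r.1 = some a ∧ s.1 = some a' ∧ causeLe A.C (pproj₁ x) a a') ∨
     (∃ b b', r.2 = some b ∧ s.2 = some b' ∧ causeLe B.C (pproj₂ x) b b'))

def ParCauseAntisymm (A B : LCS (Act N)) (x : Set (Option A.E × Option B.E)) : Prop :=
  ∀ r ∈ x, ∀ s ∈ x, ReflTransGen (parCauseStep A B x) r s →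
    ReflTransGen (parCauseStep A B x) s r → r = s

theorem parCauseStep.mem_of_subset (hrs : parCauseStep A B x r s) (hw₁ : pproj₁ w ∈ A.C)
    (hw₂ : pproj₂ w ∈ B.C) (hwx : w ⊆ x) (hinj₁ : pLocInj₁ x) (hinj₂ : pLocInj₂ x)
    (hs : s ∈ w) : r ∈ w := by
  obtain ⟨hr, -, ⟨a, a', hra, hsa, hc⟩ | ⟨b, b', hrb, hsb, hc⟩⟩ := hrs
  · obtain ⟨t, ht, hta⟩ := hc _ hw₁ (pproj₁_mono hwx) ⟨s, hs, hsa⟩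
    rwa [← hinj₁ t (hwx ht) r hr a hta hra]
  · obtain ⟨t, ht, htb⟩ := hc _ hw₂ (pproj₂_mono hwx) ⟨s, hs, hsb⟩
    rwa [← hinj₂ t (hwx ht) r hr b htb hrb]

theorem mem_of_reflTransGen_parCauseStep (h : ReflTransGen (parCauseStep A B x) r s)
    (hw₁ : pproj₁ w ∈ A.C) (hw₂ : pproj₂ w ∈ B.C) (hwx : w ⊆ x) (hinj₁ : pLocInj₁ x)
    (hinj₂ : pLocInj₂ x) (hs : s ∈ w) : r ∈ w := by
  induction h using ReflTransGen.head_induction_on with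
  | refl => exact hs
  | head hstep _ ih => exact hstep.mem_of_subset hw₁ hw₂ hwx hinj₁ hinj₂ ih

end ParCause

section LcsPar

variable {N : Type} [DecidableEq N] {A B : LCS (Act N)} {x S : Set (Option A.E × Option B.E)}
  {r s : Option A.E × Option B.E}

theorem empty_mem_lcsPar (hA : ∅ ∈ A.C) (hB : ∅ ∈ B.C) : ∅ ∈ (lcsPar A B).C :=
  have hpre : parPre A B ∅ :=
    ⟨fun _ h => h.elim, by rwa [pproj₁_empty], by rwa [pproj₂_empty], fun _ h => h.elim,
      fun _ h => h.elim⟩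
  ⟨hpre, fun _ h => h.elim, fun _ h => h.elim⟩

theorem causeLe_of_reflTransGen_parCauseStep (hinj₁ : pLocInj₁ x) (hinj₂ : pLocInj₂ x)
    (h : ReflTransGen (parCauseStep A B x) r s) : causeLe (lcsPar A B).C x r s :=
  fun _ hz hzx => mem_of_reflTransGen_parCauseStep h hz.1.2.1 hz.1.2.2.1 hzx hinj₁ hinj₂

theorem parPre_of_closed (hA : DownsetClosed A.C) (hB : DownsetClosed B.C)
    (hx : parPre A B x) (hSx : S ⊆ x) (hS : ∀ r s, parCauseStep A B x r s → s ∈ S → r ∈ S) :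
    parPre A B S := by
  obtain ⟨hlab, hx₁, hx₂, hinj₁, hinj₂⟩ := hx
  refine ⟨fun e he => hlab e (hSx he), ?_, ?_, fun e he e' he' => hinj₁ e (hSx he) e' (hSx he'),
    fun e he e' he' => hinj₂ e (hSx he) e' (hSx he')⟩
  · refine hA _ hx₁ _ (pproj₁_mono hSx) fun a ⟨t, ht, hta⟩ b ⟨u, hu, hub⟩ hba => ⟨u, ?_, hub⟩
    exact hS u t ⟨hu, hSx ht, Or.inl ⟨b, a, hub, hta, hba⟩⟩ ht
  · refine hB _ hx₂ _ (pproj₂_mono hSx) fun a ⟨t, ht, hta⟩ b ⟨u, hu, hub⟩ hba => ⟨u, ?_, hub⟩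
    exact hS u t ⟨hu, hSx ht, Or.inr ⟨b, a, hub, hta, hba⟩⟩ ht

theorem mem_lcsPar_of_closed [Finite A.E] [Finite B.E] (hA : DownsetClosed A.C)
    (hB : DownsetClosed B.C) (hx : parPre A B x) (hanti : ParCauseAntisymm A B x)
    (hSx : S ⊆ x) (hS : ∀ r s, parCauseStep A B x r s → s ∈ S → r ∈ S) :
    S ∈ (lcsPar A B).C := by
  have hSpre := parPre_of_closed hA hB hx hSx hS
  let down (u) : Set (Option A.E × Option B.E) := {t ∈ S | ReflTransGen (parCauseStep A B x) t u}
  have hdown : ∀ u, parPre A B (down u) := fun u =>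
    parPre_of_closed hA hB hx (fun t ht => hSx ht.1)
      fun r s hrs ⟨hs, hsu⟩ => ⟨hS r s hrs hs, ReflTransGen.head hrs hsu⟩
  refine ⟨hSpre, fun e he => ⟨S, subset_rfl, hSpre, Set.toFinite S, he⟩,
    fun e he e' he' hne => ?_⟩
  -- separate `e` and `e'` by the causal downset of one that is not below the other
  by_cases h : ReflTransGen (parCauseStep A B x) e e'
  · have h' : ¬ ReflTransGen (parCauseStep A B x) e' e :=
      fun h' => hne (hanti e (hSx he) e' (hSx he') h h')
    exact ⟨down e, fun t ht => ht.1, hdown e, iff_of_true ⟨he, .refl⟩ fun hz => h' hz.2⟩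
  · exact ⟨down e', fun t ht => ht.1, hdown e', iff_of_false (fun hz => h hz.2)
      fun hz => hz ⟨he', .refl⟩⟩

theorem parCauseAntisymm_of_mem (hx : x ∈ (lcsPar A B).C) : ParCauseAntisymm A B x := by
  intro r hr s hs hrs hsr
  by_contra hne
  obtain ⟨z, hzx, hz, hiff⟩ := hx.2.2 r hr s hs hne
  have hclosed {u v} (h : ReflTransGen (parCauseStep A B x) u v) : v ∈ z → u ∈ z :=
    mem_of_reflTransGen_parCauseStep h hz.2.1 hz.2.2.1 hzx hx.1.2.2.2.1 hx.1.2.2.2.2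
  have := hclosed hrs
  have := hclosed hsr
  tauto

theorem causeLe_lcsPar_iff [Finite A.E] [Finite B.E] (hA : DownsetClosed A.C)
    (hB : DownsetClosed B.C) (hx : x ∈ (lcsPar A B).C) (hs : s ∈ x) :
    causeLe (lcsPar A B).C x r s ↔ ReflTransGen (parCauseStep A B x) r s := by
  refine ⟨fun h => ?_, causeLe_of_reflTransGen_parCauseStep hx.1.2.2.2.1 hx.1.2.2.2.2⟩
  have hdown : {t ∈ x | ReflTransGen (parCauseStep A B x) t s} ∈ (lcsPar A B).C :=
    mem_lcsPar_of_closed hA hB hx.1 (parCauseAntisymm_of_mem hx) (fun t ht => ht.1)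
      fun u v huv hv => ⟨huv.1, hv.2.head huv⟩
  exact (h _ hdown (fun t ht => ht.1) ⟨hs, .refl⟩).2

theorem not_parCauseStep_of_diff_mem (hx : x ∈ (lcsPar A B).C) {e t : Option A.E × Option B.E}
    (hxe : x \ {e} ∈ (lcsPar A B).C) (ht : t ∈ x) (hne : t ≠ e) : ¬ parCauseStep A B x e t :=
  fun h => (h.mem_of_subset hxe.1.2.1 hxe.1.2.2.1 Set.sdiff_subset hx.1.2.2.2.1 hx.1.2.2.2.2
    ⟨ht, hne⟩).2 rfl

theorem downsetClosed_lcsPar {A B : LCS (Act N)} [Finite A.E] [Finite B.E]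
    (hA : DownsetClosed A.C) (hB : DownsetClosed B.C) : DownsetClosed (lcsPar A B).C :=
  fun _ hx _ hS hdown => mem_lcsPar_of_closed hA hB hx.1 (parCauseAntisymm_of_mem hx) hS
    fun r s hrs hs => hdown s hs r hrs.1
      (causeLe_of_reflTransGen_parCauseStep hx.1.2.2.2.1 hx.1.2.2.2.2 (.single hrs))

end LcsPar

section OptionLift

variable {f f' : Set (E₁ × E₂)}

/-- The paper's `f_c(e) = (f(π₁ e), π₂ e)`, with `f` lifted to `Option` (`none` marking a
component that does not take part in `e`). -/
def ParLift (f : Set (E₁ × E₂)) (g : Set ((Option E₁ × Option E₃) × (Option E₂ × Option E₃))) :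
    Prop :=
  ∀ p ∈ g, Option.Rel (fun a b => (a, b) ∈ f) p.1.1 p.2.1 ∧ p.1.2 = p.2.2

theorem Option.Rel.map_eq {r : E₁ → E₂ → Prop} {ℓ₁ : E₁ → L} {ℓ₂ : E₂ → L}
    {o₁ : Option E₁} {o₂ : Option E₂} (h : Option.Rel r o₁ o₂) (hr : ∀ a b, r a b → ℓ₁ a = ℓ₂ b) :
    o₁.map ℓ₁ = o₂.map ℓ₂ := by
  cases h with
  | none => rfl
  | some hab => exact congrArg Option.some (hr _ _ hab)

theorem Option.Rel.none_or_some {r : E₁ → E₂ → Prop} {o₁ : Option E₁} {o₂ : Option E₂}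
    (h : Option.Rel r o₁ o₂) :
    (o₁ = Option.none ∧ o₂ = Option.none) ∨
      ∃ a b, o₁ = Option.some a ∧ o₂ = Option.some b ∧ r a b := by
  cases h with
  | none => exact Or.inl ⟨rfl, rfl⟩
  | some hab => exact Or.inr ⟨_, _, rfl, rfl, hab⟩

theorem Option.Rel.exists_of_some {r : E₁ → E₂ → Prop} {a : E₁} {o : Option E₂}
    (h : Option.Rel r (Option.some a) o) : ∃ b, o = Option.some b ∧ r a b := by
  cases h with
  | some hab => exact ⟨_, rfl, hab⟩

theorem Option.Rel.mono {r s : E₁ → E₂ → Prop} {o₁ : Option E₁} {o₂ : Option E₂}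
    (h : Option.Rel r o₁ o₂) (hrs : ∀ a b, r a b → s a b) : Option.Rel s o₁ o₂ := by
  cases h with
  | none => exact .none
  | some hab => exact .some (hrs _ _ hab)

theorem Option.rel_flip_iff {r : E₁ → E₂ → Prop} {o₁ : Option E₁} {o₂ : Option E₂} :
    Option.Rel (flip r) o₂ o₁ ↔ Option.Rel r o₁ o₂ := by
  cases o₁ <;> cases o₂ <;> simp [flip]

variable {g : Set ((Option E₁ × Option E₃) × (Option E₂ × Option E₃))}

theorem parLift_swap_iff : ParLift (Prod.swap ⁻¹' f) (Prod.swap ⁻¹' g) ↔ ParLift f g := by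
  refine ⟨fun h p hp => ?_, fun h p hp => ?_⟩
  · obtain ⟨h₁, h₂⟩ := h p.swap (by simpa using hp)
    exact ⟨Option.rel_flip_iff.1 h₁, h₂.symm⟩
  · obtain ⟨h₁, h₂⟩ := h p.swap hp
    exact ⟨Option.rel_flip_iff.2 h₁, h₂.symm⟩

theorem ParLift.mono (h : ParLift f g) (hf : f ⊆ f') : ParLift f' g :=
  fun p hp => ⟨(h p hp).1.mono fun _ _ hab => hf hab, (h p hp).2⟩

theorem ParLift.insert (h : ParLift f g) {e : Option E₁ × Option E₃} {o : Option E₂}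
    (ho : Option.Rel (fun a b => (a, b) ∈ f) e.1 o) : ParLift f (insert (e, (o, e.2)) g) := by
  rintro p (rfl | hp)
  exacts [⟨ho, rfl⟩, h p hp]

end OptionLift

section LiftTransfer

variable {N : Type} {A₁ A₂ B : LCS (Act N)} {x : Set (Option A₁.E × Option B.E)}
  {y : Set (Option A₂.E × Option B.E)} {f : Set (A₁.E × A₂.E)}
  {g : Set ((Option A₁.E × Option B.E) × (Option A₂.E × Option B.E))}
  {p p' : Option A₁.E × Option B.E} {q q' : Option A₂.E × Option B.E}

theorem ParLift.restrMap (h : ParLift f g) (w : Set (Option A₁.E × Option B.E)) :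
    ParLift (restrMap f (pproj₁ w)) (restrMap g w) := by
  rintro ⟨⟨o₁, u⟩, ⟨o₂, v⟩⟩ ⟨hp, hpw⟩
  obtain ⟨hrel, huv⟩ := h _ hp
  refine ⟨?_, huv⟩
  cases hrel with
  | none => exact .none
  | some hab => exact .some ⟨hab, _, hpw, rfl⟩

theorem ParLift.pproj₂_eq (h : ParLift f g) (hg : IsBij g x y) : pproj₂ y = pproj₂ x := by
  ext b
  constructor
  · rintro ⟨q, hq, hqb⟩
    obtain ⟨p, hp, -⟩ := hg.2.2 q hq
    exact ⟨p, (hg.1 _ hp).1, (h _ hp).2.trans hqb⟩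
  · rintro ⟨p, hp, hpb⟩
    obtain ⟨q, hq, -⟩ := hg.2.1 p hp
    exact ⟨q, (hg.1 _ hq).2, (h _ hq).2.symm.trans hpb⟩

theorem ParLift.parCauseStep_of (h : ParLift f g) (hg : IsBij g x y)
    (hf : LabOrdIso A₁.C A₂.C A₁.lab A₂.lab (pproj₁ x) (pproj₁ y) f)
    (hpq : (p, q) ∈ g) (hpq' : (p', q') ∈ g) (hstep : parCauseStep A₁ B x p p') :
    parCauseStep A₂ B y q q' := by
  refine ⟨(hg.1 _ hpq).2, (hg.1 _ hpq').2, ?_⟩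
  obtain ⟨hrel, hpq₂⟩ := h _ hpq
  obtain ⟨hrel', hpq₂'⟩ := h _ hpq'
  obtain ⟨-, -, ⟨a, a', ha, ha', hc⟩ | ⟨b, b', hb, hb', hc⟩⟩ := hstep
  · rw [ha] at hrel
    rw [ha'] at hrel'
    obtain ⟨c, hc₁, hac⟩ := hrel.exists_of_some
    obtain ⟨c', hc₁', hac'⟩ := hrel'.exists_of_some
    exact Or.inl ⟨c, c', hc₁, hc₁', (hf.2.2 _ hac _ hac').1 hc⟩
  · refine Or.inr ⟨b, b', hpq₂ ▸ hb, hpq₂' ▸ hb', ?_⟩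
    rwa [h.pproj₂_eq hg]

theorem ParLift.parCauseStep_iff (h : ParLift f g) (hg : IsBij g x y)
    (hf : LabOrdIso A₁.C A₂.C A₁.lab A₂.lab (pproj₁ x) (pproj₁ y) f)
    (hpq : (p, q) ∈ g) (hpq' : (p', q') ∈ g) :
    parCauseStep A₁ B x p p' ↔ parCauseStep A₂ B y q q' :=
  ⟨h.parCauseStep_of hg hf hpq hpq',
    (parLift_swap_iff.2 h).parCauseStep_of (isBij_swap_iff.2 hg) (labOrdIso_swap_iff.2 hf)
      hpq hpq'⟩

theorem ParLift.reflTransGen_iff (h : ParLift f g) (hg : IsBij g x y)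
    (hf : LabOrdIso A₁.C A₂.C A₁.lab A₂.lab (pproj₁ x) (pproj₁ y) f)
    (hpq : (p, q) ∈ g) (hpq' : (p', q') ∈ g) :
    ReflTransGen (parCauseStep A₁ B x) p p' ↔ ReflTransGen (parCauseStep A₂ B y) q q' :=
  hg.reflTransGen_iff (fun _ _ h => h.1) (fun _ _ h => h.1)
    (fun _ _ _ _ h₁ h₂ => h.parCauseStep_iff hg hf h₁ h₂) hpq hpq'

theorem ParLift.parCauseAntisymm (h : ParLift f g) (hg : IsBij g x y)
    (hf : LabOrdIso A₁.C A₂.C A₁.lab A₂.lab (pproj₁ x) (pproj₁ y) f)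
    (hx : ParCauseAntisymm A₁ B x) : ParCauseAntisymm A₂ B y :=
  (isBij_swap_iff.2 hg).antisymm_of_iff
    (fun _ _ _ _ h₁ h₂ => (h.reflTransGen_iff hg hf h₁ h₂).symm) hx

variable [DecidableEq N]

theorem ParLift.labOrdIso [Finite A₁.E] [Finite A₂.E] [Finite B.E] (hA₁ : DownsetClosed A₁.C)
    (hA₂ : DownsetClosed A₂.C) (hB : DownsetClosed B.C) (h : ParLift f g) (hg : IsBij g x y)
    (hf : LabOrdIso A₁.C A₂.C A₁.lab A₂.lab (pproj₁ x) (pproj₁ y) f)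
    (hx : x ∈ (lcsPar A₁ B).C) (hy : y ∈ (lcsPar A₂ B).C) :
    LabOrdIso (lcsPar A₁ B).C (lcsPar A₂ B).C (lcsPar A₁ B).lab (lcsPar A₂ B).lab x y g := by
  refine ⟨hg, fun p hp => ?_, fun p hp q hq => ?_⟩
  · change (syncLab (p.1.1.map A₁.lab) (p.1.2.map B.lab)).getD .tau =
      (syncLab (p.2.1.map A₂.lab) (p.2.2.map B.lab)).getD .tau
    rw [(h p hp).1.map_eq fun a b hab => hf.2.1 (a, b) hab, (h p hp).2]
  · exact (causeLe_lcsPar_iff hA₁ hB hx (hg.1 _ hq).1).trans <|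
      (h.reflTransGen_iff hg hf hp hq).trans (causeLe_lcsPar_iff hA₂ hB hy (hg.1 _ hq).2).symm

theorem ParLift.diff_mem_lcsPar [Finite A₂.E] [Finite B.E] (hA₂ : DownsetClosed A₂.C)
    (hB : DownsetClosed B.C) (h : ParLift f g) (hg : IsBij g x y)
    (hf : LabOrdIso A₁.C A₂.C A₁.lab A₂.lab (pproj₁ x) (pproj₁ y) f)
    (hx : x ∈ (lcsPar A₁ B).C) (hy : y ∈ (lcsPar A₂ B).C) (hpq : (p, q) ∈ g)
    (hdel : x \ {p} ∈ (lcsPar A₁ B).C) : y \ {q} ∈ (lcsPar A₂ B).C := by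
  refine mem_lcsPar_of_closed hA₂ hB hy.1 (parCauseAntisymm_of_mem hy) Set.sdiff_subset
    fun r s hrs hs => ⟨hrs.1, ?_⟩
  rintro (rfl : r = q)
  obtain ⟨p', hp', -⟩ := hg.2.2 s hs.1
  refine not_parCauseStep_of_diff_mem hx hdel (hg.1 _ hp').1 (fun hp'p => hs.2 ?_)
    ((h.parCauseStep_iff hg hf hpq hp').2 hrs)
  exact hg.right_unique (hp'p ▸ hp') hpq

end LiftTransfer

section Candidate

variable {N : Type} {A₁ A₂ B : LCS (Act N)} {R : Set A₁.E → Set A₂.E → Set (A₁.E × A₂.E) → Prop}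
  {x : Set (Option A₁.E × Option B.E)} {y : Set (Option A₂.E × Option B.E)}
  {f : Set (A₁.E × A₂.E)} {g : Set ((Option A₁.E × Option B.E) × (Option A₂.E × Option B.E))}

theorem IsHHPSim.exists_rel_pproj₁_insert (hsim : IsHHPSim A₁.C A₂.C A₁.lab A₂.lab R)
    (hf : R (pproj₁ x) (pproj₁ y) f) {e : Option A₁.E × Option B.E} (he : e ∉ x)
    (hinj : pLocInj₁ (insert e x)) (hins : pproj₁ (insert e x) ∈ A₁.C) :
    ∃ o f', Option.Rel (fun a b => (a, b) ∈ f') e.1 o ∧ (∀ b, o = some b → b ∉ pproj₁ y) ∧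
      R (pproj₁ (insert e x)) (pproj₁ (insert (o, e.2) y)) f' ∧ f ⊆ f' := by
  rcases he₁ : e.1 with _ | a
  · refine ⟨none, f, .none, fun _ h => (Option.some_ne_none _ h.symm).elim, ?_, subset_rfl⟩
    rwa [pproj₁_insert_none he₁, pproj₁_insert_none rfl]
  · rw [pproj₁_insert_some he₁] at hins
    obtain ⟨-, -, hiso, hfwd, -⟩ := hsim _ _ _ hf
    obtain ⟨b, f', hb, -, hR', hres⟩ :=
      hfwd a (notMem_pproj₁_of_insert hinj he he₁) hins
    have hsub : f ⊆ f' := hres ▸ Set.sep_subset _ _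
    refine ⟨some b, f', .some (hiso.1.mem_of_subset_insert (hsim _ _ _ hR').2.2.1.1 hsub hb),
      fun _ h => Option.some_inj.1 h ▸ hb, ?_, hsub⟩
    rwa [pproj₁_insert_some he₁, pproj₁_insert_some rfl]

theorem IsHHPSim.rel_pproj₁_diff (hsim : IsHHPSim A₁.C A₂.C A₁.lab A₂.lab R)
    (hf : R (pproj₁ x) (pproj₁ y) f) (hg : IsBij g x y) (h : ParLift f g)
    (hinjx : pLocInj₁ x) (hinjy : pLocInj₁ y) {p q} (hpq : (p, q) ∈ g)
    (hdel : pproj₁ (x \ {p}) ∈ A₁.C) :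
    R (pproj₁ (x \ {p})) (pproj₁ (y \ {q})) (restrMap f (pproj₁ (x \ {p}))) := by
  obtain ⟨-, -, hiso, -, hbwd⟩ := hsim _ _ _ hf
  rcases (h _ hpq).1.none_or_some with ⟨hp₁, hq₁⟩ | ⟨a, b, hp₁, hq₁, hab⟩
  · rw [pproj₁_diff_none hp₁, pproj₁_diff_none hq₁,
      ← (hiso.1.eq_restrMap_iff_subset hiso.1).2 subset_rfl]
    exact hf
  · have ha : a ∈ pproj₁ x := ⟨p, (hg.1 _ hpq).1, hp₁⟩
    rw [pproj₁_diff_some hinjx (hg.1 _ hpq).1 hp₁] at hdel ⊢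
    rw [pproj₁_diff_some hinjy (hg.1 _ hpq).2 hq₁]
    obtain ⟨b', -, -, hR'⟩ := hbwd a ha hdel
    obtain rfl : b = b' :=
      hiso.1.right_unique hab (hiso.1.mem_of_restrMap_diff ha (hsim _ _ _ hR').2.2.1.1)
    exact hR'

variable [DecidableEq N]

/-- The paper's candidate relation `R_c`. -/
def parCandidate (A₁ A₂ B : LCS (Act N)) (R : Set A₁.E → Set A₂.E → Set (A₁.E × A₂.E) → Prop)
    (x : Set (Option A₁.E × Option B.E)) (y : Set (Option A₂.E × Option B.E))
    (g : Set ((Option A₁.E × Option B.E) × (Option A₂.E × Option B.E))) : Prop :=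
  x ∈ (lcsPar A₁ B).C ∧ y ∈ (lcsPar A₂ B).C ∧
    ∃ f, R (pproj₁ x) (pproj₁ y) f ∧ IsBij g x y ∧ ParLift f g

theorem swapRel_parCandidate :
    swapRel (parCandidate A₁ A₂ B R) = parCandidate A₂ A₁ B (swapRel R) := by
  funext y x G
  refine propext ⟨fun ⟨hx, hy, f, hf, hg, h⟩ => ⟨hy, hx, Prod.swap ⁻¹' f,
    swapRel_preimage_swap.2 hf, isBij_swap_iff.1 hg, ?_⟩,
    fun ⟨hy, hx, F, hF, hG, h⟩ => ⟨hx, hy, _, hF, isBij_swap_iff.2 hG, parLift_swap_iff.2 h⟩⟩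
  simpa only [preimage_swap_preimage_swap] using parLift_swap_iff.2 h

theorem parCandidate_empty (hA₁ : ∅ ∈ A₁.C) (hA₂ : ∅ ∈ A₂.C) (hB : ∅ ∈ B.C) (hR : R ∅ ∅ ∅) :
    parCandidate A₁ A₂ B R ∅ ∅ ∅ := by
  refine ⟨empty_mem_lcsPar hA₁ hB, empty_mem_lcsPar hA₂ hB, ∅, ?_,
    ⟨fun _ h => h.elim, fun _ h => h.elim, fun _ h => h.elim⟩, fun _ h => h.elim⟩
  rwa [pproj₁_empty, pproj₁_empty]

theorem parCandidate_insert [Finite A₂.E] [Finite B.E] (hA₂ : DownsetClosed A₂.C)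
    (hB : DownsetClosed B.C) (hsim : IsHHPSim A₁.C A₂.C A₁.lab A₂.lab R)
    (hy : y ∈ (lcsPar A₂ B).C) (hg : IsBij g x y) (h : ParLift f g)
    {e : Option A₁.E × Option B.E} (he : e ∉ x) (hins : insert e x ∈ (lcsPar A₁ B).C)
    {o : Option A₂.E} {f' : Set (A₁.E × A₂.E)} (ho : Option.Rel (fun a b => (a, b) ∈ f') e.1 o)
    (hfresh : ∀ b, o = some b → b ∉ pproj₁ y)
    (hR : R (pproj₁ (insert e x)) (pproj₁ (insert (o, e.2) y)) f') (hff' : f ⊆ f') :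
    (o, e.2) ∉ y ∧
      parCandidate A₁ A₂ B R (insert e x) (insert (o, e.2) y) (insert (e, (o, e.2)) g) := by
  obtain ⟨-, hy₁, hiso, -⟩ := hsim _ _ _ hR
  have hlab : syncLab (o.map A₂.lab) (e.2.map B.lab) ≠ none := by
    rw [← ho.map_eq fun a b hab => hiso.2.1 (a, b) hab]
    exact hins.1.1 e (Set.mem_insert _ _)
  have hfresh₂ : ∀ c, e.2 = some c → c ∉ pproj₂ y := by
    rw [h.pproj₂_eq hg]
    exact fun c => notMem_pproj₂_of_insert hins.1.2.2.2.2 he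
  have he' : (o, e.2) ∉ y := notMem_of_fresh hfresh hfresh₂ fun hnone => by
    obtain ⟨rfl, he₂⟩ := Prod.mk.inj hnone
    rw [he₂] at hlab
    exact hlab rfl
  have hg' := hg.insert_pair he he'
  have h' : ParLift f' (insert (e, (o, e.2)) g) := (h.mono hff').insert ho
  have hy₂ : pproj₂ (insert (o, e.2) y) = pproj₂ (insert e x) := by
    rw [pproj₂_insert, pproj₂_insert, h.pproj₂_eq hg]
  have hpre : parPre A₂ B (insert (o, e.2) y) := by
    refine ⟨?_, hy₁, hy₂ ▸ hins.1.2.2.1, pLocInj₁_insert hy.1.2.2.2.1 hfresh,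
      pLocInj₂_insert hy.1.2.2.2.2 hfresh₂⟩
    rintro r (rfl | hr)
    exacts [hlab, hy.1.1 r hr]
  have hanti := h'.parCauseAntisymm hg' hiso (parCauseAntisymm_of_mem hins)
  exact ⟨he', hins, mem_lcsPar_of_closed hA₂ hB hpre hanti subset_rfl fun r _ hrs _ => hrs.1,
    f', hR, hg', h'⟩

theorem IsHHPSim.parCandidate [Finite A₁.E] [Finite A₂.E] [Finite B.E]
    (hA₁ : DownsetClosed A₁.C) (hA₂ : DownsetClosed A₂.C) (hB : DownsetClosed B.C)
    (hsim : IsHHPSim A₁.C A₂.C A₁.lab A₂.lab R) :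
    IsHHPSim (lcsPar A₁ B).C (lcsPar A₂ B).C (lcsPar A₁ B).lab (lcsPar A₂ B).lab
      (parCandidate A₁ A₂ B R) := by
  rintro x y g ⟨hx, hy, f, hf, hg, h⟩
  obtain ⟨-, -, hiso, -, -⟩ := hsim _ _ _ hf
  refine ⟨hx, hy, h.labOrdIso hA₁ hA₂ hB hg hiso hx hy, fun e he hins => ?_, fun p hp hdel => ?_⟩
  · obtain ⟨o, f', ho, hfresh, hR', hff'⟩ :=
      hsim.exists_rel_pproj₁_insert hf he hins.1.2.2.2.1 hins.1.2.1
    obtain ⟨he', hcand⟩ := parCandidate_insert hA₂ hB hsim hy hg h he hins ho hfresh hR' hff'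
    exact ⟨_, _, he', hcand.2.1, hcand,
      (hg.eq_restrMap_iff_subset (hg.insert_pair he he')).2 (Set.subset_insert _ _)⟩
  · obtain ⟨q, hq, -⟩ := hg.2.1 p hp
    have hy' := h.diff_mem_lcsPar hA₂ hB hg hiso hx hy hq hdel
    refine ⟨q, (hg.1 _ hq).2, hy', hdel, hy', _,
      hsim.rel_pproj₁_diff hf hg h hx.1.2.2.2.1 hy.1.2.2.2.1 hq hdel.1.2.1, hg.restrMap_diff hq,
      h.restrMap _⟩

theorem IsHHPB.parCandidate [Finite A₁.E] [Finite A₂.E] [Finite B.E]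
    (hA₁ : DownsetClosed A₁.C) (hA₂ : DownsetClosed A₂.C) (hB : DownsetClosed B.C)
    (hB₀ : ∅ ∈ B.C) (hR : IsHHPB A₁.C A₂.C A₁.lab A₂.lab R) :
    IsHHPB (lcsPar A₁ B).C (lcsPar A₂ B).C (lcsPar A₁ B).lab (lcsPar A₂ B).lab
      (parCandidate A₁ A₂ B R) := by
  obtain ⟨h₀, hsim, hsim'⟩ := isHHPB_iff.1 hR
  obtain ⟨hA₁₀, hA₂₀, -⟩ := hsim _ _ _ h₀
  have hsim'' := hsim'.parCandidate hA₂ hA₁ hB (B := B)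
  rw [← swapRel_parCandidate] at hsim''
  exact isHHPB_iff.2 ⟨parCandidate_empty hA₁₀ hA₂₀ hB₀ h₀, hsim.parCandidate hA₁ hA₂ hB, hsim''⟩

end Candidate

section Encoding

variable {N : Type} [DecidableEq N]

instance instFiniteEncE (P : CCS N) : Finite (enc P).E := by
  induction P with
  | nil => exact inferInstanceAs (Finite Empty)
  | act α P ih => exact inferInstanceAs (Finite (Option (enc P).E))
  | sum P Q ihP ihQ => exact inferInstanceAs (Finite ((enc P).E ⊕ (enc Q).E))
  | par P Q ihP ihQ => exact inferInstanceAs (Finite (Option (enc P).E × Option (enc Q).E))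
  | res a P ih => exact ih

theorem empty_mem_enc (P : CCS N) : ∅ ∈ (enc P).C := by
  induction P with
  | nil => exact rfl
  | act α P ih => exact Or.inl rfl
  | sum P Q ihP ihQ => exact Or.inl ⟨∅, ihP, (Set.image_empty _).symm⟩
  | par P Q ihP ihQ => exact empty_mem_lcsPar ihP ihQ
  | res a P ih => exact ⟨ih, fun _ h => h.elim⟩

theorem downsetClosed_enc (P : CCS N) : DownsetClosed (enc P).C := by
  induction P with
  | nil => exact downsetClosed_singleton_empty
  | act α P ih => exact ih.prefix
  | sum P Q ihP ihQ => exact ihP.sum ihQ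
  | par P Q ihP ihQ => exact downsetClosed_lcsPar ihP ihQ
  | res a P ih => exact ih.sep_forall _

end Encoding

/-- hereditary history preserving bisimulation between the
encodings of `P₁` and `P₂` is preserved by parallel contexts. -/
theorem hhpb_preserved_by_parallel_context {N : Type} [DecidableEq N]
    (P₁ P₂ : CCS N)
    (h : ∃ R, IsHHPB (enc P₁).C (enc P₂).C (enc P₁).lab (enc P₂).lab R) :
    ∀ Q : CCS N, ∃ R',
      IsHHPB (enc (CCS.par P₁ Q)).C (enc (CCS.par P₂ Q)).C
        (enc (CCS.par P₁ Q)).lab (enc (CCS.par P₂ Q)).lab R' := by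
  obtain ⟨R, hR⟩ := h
  exact fun Q => ⟨_, hR.parCandidate (downsetClosed_enc P₁) (downsetClosed_enc P₂)
    (downsetClosed_enc Q) (empty_mem_enc Q)⟩
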